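/- arXiv:math/0502141 — 5 statements merged into one kernel-verified Lean document; each statement's English description precedes it below -/
import Mathlib

section
/- The sequence (log n)_{n ≥ 1} is not holonomic over ℝ: there do not exist real polynomials p_0, p_1, ..., p_d, not all zero, such that p_d(n)·log(n+d) + ... + p_1(n)·log(n+1) + p_0(n)·log n = 0 for every integer n ≥ 1. -/
/-!
Put `t = 1/n` and let `q i` be the reflection of `p i` at a common degree bound `D`, so that
`q i (t) = t ^ D * p i (n)`. Dividing the recurrence by `n ^ D` turns it into
`Q(t) log t = ∑ i, q i (t) log (1 + i t)` at every `t = 1/n`, where `Q = ∑ i, q i`.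
The right-hand side is analytic at `0`, while `log` admits no expansion `t ^ k * (analytic)` as
`t → 0⁺`; hence `Q = 0`. The right-hand side then vanishes at all `1/n`, hence, by the identity
theorem, on all of `(-1/d, ∞)`; near `t = -1/d` only the `d`-th logarithm is singular, which forces
`q d = 0`, and downward induction gives `q i = 0` for `i ≥ 1`, whence also `q 0 = Q - ∑ q i = 0`.
-/

open Polynomial Filter Topology Real Set

@[fun_prop]
theorem AnalyticAt.eval_polynomial {𝕜 : Type*} [NontriviallyNormedField 𝕜] {f : 𝕜 → 𝕜} {x : 𝕜}
    (hf : AnalyticAt 𝕜 f x) (p : 𝕜[X]) : AnalyticAt 𝕜 (fun t => p.eval (f t)) x := by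
  simpa using hf.aeval_polynomial p

namespace Polynomial

theorem eq_zero_of_eventually_eval_eq_zero {𝕜 : Type*} [NontriviallyNormedField 𝕜] {p : 𝕜[X]}
    {x : 𝕜} (h : ∀ᶠ t in 𝓝 x, p.eval t = 0) : p = 0 :=
  p.eq_zero_of_infinite_isRoot (infinite_of_mem_nhds x h)

theorem eval_reflect_inv {𝕜 : Type*} [Field 𝕜] {p : 𝕜[X]} {N : ℕ} (hp : p.natDegree ≤ N)
    {x : 𝕜} (hx : x ≠ 0) : (p.reflect N).eval x⁻¹ = x⁻¹ ^ N * p.eval x := by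
  let := invertibleOfNonzero hx
  have h := eval₂_reflect_mul_pow (RingHom.id 𝕜) x N p hp
  rw [eval₂_id, eval₂_id, invOf_eq_inv] at h
  rw [← h, inv_pow, mul_left_comm, inv_mul_cancel₀ (pow_ne_zero N hx), mul_one]

end Polynomial

theorem not_frequently_pow_mul_log_eq_pow_mul_of_le {u w : ℝ → ℝ} (hu : ContinuousAt u 0)
    (hu0 : u 0 ≠ 0) (hw : ContinuousAt w 0) {r k : ℕ} (hrk : r ≤ k) :
    ¬∃ᶠ x in 𝓝[>] 0, x ^ r * u x * log x = x ^ k * w x := by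
  obtain ⟨j, rfl⟩ := Nat.exists_eq_add_of_le hrk
  have hlim : Tendsto (fun x => u x - x ^ j * w x * (log x)⁻¹) (𝓝[>] 0) (𝓝 (u 0 - 0)) := by
    refine (hu.tendsto.mono_left nhdsWithin_le_nhds).sub ?_
    have hw' := ((continuous_pow j).continuousAt.mul hw).tendsto.mono_left
      (nhdsWithin_le_nhds (s := Ioi 0))
    simpa using hw'.mul tendsto_log_nhdsGT_zero.inv_tendsto_atBot
  intro h
  obtain ⟨x, hx, hne, hxpos, hx1⟩ :=
    (h.and_eventually ((hlim.eventually_ne (b₂ := 0) (by simpa using hu0)).and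
      (Ioo_mem_nhdsGT zero_lt_one))).exists
  have hlog : log x ≠ 0 := (log_neg hxpos hx1).ne
  apply hne
  rw [pow_add, mul_assoc, mul_assoc, mul_right_inj' (pow_ne_zero r hxpos.ne')] at hx
  rw [← hx]
  field_simp
  ring

theorem not_frequently_pow_mul_log_eq_pow_mul_of_lt {u v : ℝ → ℝ} (hu : ContinuousAt u 0)
    (hv : ContinuousAt v 0) (hv0 : v 0 ≠ 0) {r k : ℕ} (hkr : k < r) :
    ¬∃ᶠ x in 𝓝[>] 0, x ^ r * u x * log x = x ^ k * v x := by
  obtain ⟨j, rfl⟩ := Nat.exists_eq_add_of_lt hkr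
  have hlim : Tendsto (fun x => log x * x ^ (j + 1) * u x - v x) (𝓝[>] 0)
      (𝓝 (0 * u 0 - v 0)) := by
    refine (Tendsto.mul ?_ (hu.tendsto.mono_left nhdsWithin_le_nhds)).sub
      (hv.tendsto.mono_left nhdsWithin_le_nhds)
    simpa [← rpow_natCast] using
      tendsto_log_mul_rpow_nhdsGT_zero (r := ((j + 1 : ℕ) : ℝ)) (by positivity)
  intro h
  obtain ⟨x, hx, hne, hxpos⟩ := (h.and_eventually
    ((hlim.eventually_ne (b₂ := 0) (by simpa using hv0)).and self_mem_nhdsWithin)).exists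
  apply hne
  rw [add_assoc, pow_add, mul_assoc, mul_assoc,
    mul_right_inj' (pow_ne_zero k (ne_of_gt hxpos))] at hx
  rw [← hx]
  ring

theorem AnalyticAt.eventually_eq_zero_of_frequently_mul_log_eq {f g : ℝ → ℝ}
    (hf : AnalyticAt ℝ f 0) (hg : AnalyticAt ℝ g 0)
    (h : ∃ᶠ x in 𝓝[>] 0, f x * Real.log x = g x) : ∀ᶠ x in 𝓝 0, f x = 0 := by
  by_contra hf0
  obtain ⟨r, u, hu, hu0, hfu⟩ := hf.exists_eventuallyEq_pow_smul_nonzero_iff.mpr hf0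
  have hfu' : ∃ᶠ x in 𝓝[>] 0, x ^ r * u x * Real.log x = g x :=
    (h.and_eventually (nhdsWithin_le_nhds hfu)).mono fun x ⟨hx, hfx⟩ => by
      simpa [hfx] using hx
  by_cases hg0 : ∀ᶠ x in 𝓝 0, g x = 0
  · refine not_frequently_pow_mul_log_eq_pow_mul_of_le (w := fun _ => 0) hu.continuousAt hu0
      continuousAt_const (le_refl r) ((hfu'.and_eventually (nhdsWithin_le_nhds hg0)).mono ?_)
    rintro x ⟨hx, hgx⟩
    simpa [hgx] using hx
  obtain ⟨k, v, hv, hv0, hgv⟩ := hg.exists_eventuallyEq_pow_smul_nonzero_iff.mpr hg0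
  have hfg : ∃ᶠ x in 𝓝[>] 0, x ^ r * u x * Real.log x = x ^ k * v x :=
    (hfu'.and_eventually (nhdsWithin_le_nhds hgv)).mono fun x ⟨hx, hgx⟩ => by
      simpa [hgx] using hx
  rcases le_or_gt r k with hrk | hkr
  · exact not_frequently_pow_mul_log_eq_pow_mul_of_le hu.continuousAt hu0 hv.continuousAt hrk hfg
  · exact not_frequently_pow_mul_log_eq_pow_mul_of_lt hu.continuousAt hv.continuousAt hv0 hkr hfg

theorem one_add_mul_pos_of_le {a b t : ℝ} (ha : 0 ≤ a) (hab : a ≤ b) (ht : -b⁻¹ < t) :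
    0 < 1 + a * t := by
  rcases ha.eq_or_lt with rfl | ha
  · simp
  have hb := ha.trans_le hab
  rw [neg_lt, ← one_div, lt_div_iff₀ hb] at ht
  rcases le_or_gt 0 t with ht0 | ht0
  · positivity
  · nlinarith

section LogCombination

variable {ι : Type*} {s : Finset ι} {a : ι → ℝ} {q : ι → ℝ[X]}

noncomputable def logCombination (s : Finset ι) (a : ι → ℝ) (q : ι → ℝ[X]) (t : ℝ) : ℝ :=
  ∑ i ∈ s, (q i).eval t * log (1 + a i * t)

theorem analyticAt_logCombination {t : ℝ} (h : ∀ i ∈ s, 0 < 1 + a i * t) :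
    AnalyticAt ℝ (logCombination s a q) t := by
  unfold logCombination
  exact Finset.analyticAt_fun_sum _ fun i hi => by fun_prop (disch := exact h i hi)

theorem eq_zero_of_frequently_logCombination_eq_zero_of_forall_lt [DecidableEq ι] {j : ι}
    (hj : j ∈ s) (hpos : ∀ i ∈ s, 0 < a i) (hlt : ∀ i ∈ s, i ≠ j → a i < a j)
    (h : ∃ᶠ t in 𝓝[≠] 0, logCombination s a q t = 0) : q j = 0 := by
  have haj := hpos j hj
  have hzero : EqOn (logCombination s a q) 0 (Ioi (-(a j)⁻¹)) := by
    refine AnalyticOnNhd.eqOn_zero_of_preconnected_of_frequently_eq_zero (fun t ht => ?_)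
      isPreconnected_Ioi (neg_lt_zero.mpr (inv_pos.mpr haj)) h
    refine analyticAt_logCombination fun i hi => one_add_mul_pos_of_le (hpos i hi).le ?_ ht
    rcases eq_or_ne i j with rfl | hij
    exacts [le_rfl, (hlt i hi hij).le]
  -- with `x = 1 + a j * t` the `j`-th term becomes `q j (·) * log x`; the others stay analytic
  have hlog : ∀ x ∈ Ioi (0 : ℝ), (q j).eval ((x - 1) / a j) * log x =
      -logCombination (s.erase j) a q ((x - 1) / a j) := by
    intro x hx
    have := hzero (show (x - 1) / a j ∈ Ioi (-(a j)⁻¹) by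
      rw [mem_Ioi, lt_div_iff₀ haj]; field_simp; linarith [mem_Ioi.mp hx])
    rw [Pi.zero_apply, logCombination, ← Finset.add_sum_erase s _ hj] at this
    rw [show 1 + a j * ((x - 1) / a j) = x by field_simp; ring] at this
    rw [logCombination]
    linarith
  have hg : AnalyticAt ℝ (fun x => -logCombination (s.erase j) a q ((x - 1) / a j)) 0 := by
    refine ((analyticAt_logCombination fun i hi => ?_).comp (by fun_prop)).neg
    rw [zero_sub, neg_div, mul_neg, ← sub_eq_add_neg, sub_pos, mul_one_div, div_lt_one haj]
    exact hlt i (Finset.mem_of_mem_erase hi) (Finset.ne_of_mem_erase hi)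
  have hev := AnalyticAt.eventually_eq_zero_of_frequently_mul_log_eq (by fun_prop) hg
    (eventually_nhdsWithin_of_forall hlog).frequently
  refine Polynomial.eq_zero_of_eventually_eval_eq_zero (x := -(a j)⁻¹) ?_
  have hc : Tendsto (fun t => 1 + a j * t) (𝓝 (-(a j)⁻¹)) (𝓝 0) :=
    (by fun_prop : Continuous fun t => 1 + a j * t).tendsto' _ _
      (by rw [mul_neg, mul_inv_cancel₀ haj.ne', add_neg_cancel])
  filter_upwards [hc.eventually hev] with t ht
  rwa [add_sub_cancel_left, mul_div_cancel_left₀ _ haj.ne'] at ht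

theorem eq_zero_of_frequently_logCombination_eq_zero (ha : InjOn a s) (hpos : ∀ i ∈ s, 0 < a i)
    (h : ∃ᶠ t in 𝓝[≠] 0, logCombination s a q t = 0) : ∀ i ∈ s, q i = 0 := by
  classical
  induction s using Finset.induction_on_max_value a with
  | empty => simp
  | insert j s hjs hmax ih =>
    have hqj : q j = 0 := by
      refine eq_zero_of_frequently_logCombination_eq_zero_of_forall_lt
        (Finset.mem_insert_self j s) hpos
        (fun i hi hij => (hmax i (Finset.mem_of_mem_insert_of_ne hi hij)).lt_of_ne ?_) h
      exact fun hij' => hij (ha hi (Finset.mem_insert_self j s) hij')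
    have hs : logCombination (insert j s) a q = logCombination s a q := by
      funext t
      simp [logCombination, Finset.sum_insert hjs, hqj]
    intro i hi
    rcases Finset.mem_insert.mp hi with rfl | hi
    · exact hqj
    · exact ih (ha.mono (Finset.subset_insert j s))
        (fun i hi => hpos i (Finset.mem_insert_of_mem hi)) (hs ▸ h) i hi

theorem logCombination_erase [DecidableEq ι] {i : ι} (hi : a i = 0) :
    logCombination (s.erase i) a q = logCombination s a q := by
  funext t
  by_cases his : i ∈ s
  · exact Finset.sum_erase _ (by simp [hi])
  · rw [Finset.erase_eq_of_notMem his]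

end LogCombination

theorem inv_pow_mul_sum_eval_mul_log_add_eq {ι : Type*} (s : Finset ι) (p : ι → ℝ[X]) {a : ι → ℝ}
    (ha : ∀ i ∈ s, 0 ≤ a i) {D : ℕ} (hD : ∀ i ∈ s, (p i).natDegree ≤ D) {x : ℝ} (hx : 0 < x) :
    x⁻¹ ^ D * ∑ i ∈ s, (p i).eval x * log (x + a i) =
      logCombination s a (fun i => (p i).reflect D) x⁻¹ -
        (∑ i ∈ s, (p i).reflect D).eval x⁻¹ * log x⁻¹ := by
  rw [logCombination, eval_finsetSum, Finset.mul_sum, Finset.sum_mul, ← Finset.sum_sub_distrib]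
  refine Finset.sum_congr rfl fun i hi => ?_
  have hxa : x + a i = x * (1 + a i * x⁻¹) := by field_simp
  have hai := ha i hi
  rw [eval_reflect_inv (hD i hi) hx.ne', hxa, log_mul hx.ne' (by positivity), log_inv]
  ring

theorem frequently_eval_sum_reflect_mul_log_eq {ι : Type*} (s : Finset ι) (p : ι → ℝ[X])
    {a : ι → ℝ} (ha : ∀ i ∈ s, 0 ≤ a i) {D : ℕ} (hD : ∀ i ∈ s, (p i).natDegree ≤ D)
    (h : ∀ n : ℕ, 1 ≤ n → ∑ i ∈ s, (p i).eval (n : ℝ) * log (n + a i) = 0) :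
    ∃ᶠ t in 𝓝[>] 0, (∑ i ∈ s, (p i).reflect D).eval t * log t =
      logCombination s a (fun i => (p i).reflect D) t := by
  refine (tendsto_inv_atTop_nhdsGT_zero.comp tendsto_natCast_atTop_atTop).frequently
    (Eventually.frequently (eventually_atTop.mpr ⟨1, fun n hn => ?_⟩))
  have := inv_pow_mul_sum_eval_mul_log_add_eq s p ha hD (Nat.cast_pos.mpr hn)
  rw [h n hn, mul_zero, eq_comm, sub_eq_zero] at this
  exact this.symm

theorem log_not_holonomic_real :
    ¬ ∃ (d : ℕ) (p : Fin (d + 1) → Polynomial ℝ),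
      (∃ i, p i ≠ 0) ∧
      ∀ n : ℕ, 1 ≤ n →
        (∑ i : Fin (d + 1), (p i).eval (n : ℝ) * Real.log (n + i)) = 0 := by
  rintro ⟨d, p, ⟨i₀, hi₀⟩, hrec⟩
  set a := fun i : Fin (d + 1) => ((i : ℕ) : ℝ)
  set q := fun i => (p i).reflect (Finset.univ.sup fun i => (p i).natDegree)
  have hrel : ∃ᶠ t in 𝓝[>] 0, (∑ i, q i).eval t * log t = logCombination Finset.univ a q t :=
    frequently_eval_sum_reflect_mul_log_eq _ p (fun _ _ => by positivity)
      (fun i _ => Finset.le_sup (f := fun i => (p i).natDegree) (Finset.mem_univ i)) hrec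
  have hQ : ∑ i, q i = 0 := eq_zero_of_eventually_eval_eq_zero <|
    (AnalyticOnNhd.eval_polynomial _ 0 (mem_univ 0)).eventually_eq_zero_of_frequently_mul_log_eq
      (analyticAt_logCombination fun i _ => by simp) hrel
  have hq : ∀ i ∈ Finset.univ.erase 0, q i = 0 := by
    refine eq_zero_of_frequently_logCombination_eq_zero
      (fun i _ j _ hij => Fin.ext (Nat.cast_injective hij))
      (fun i hi => Nat.cast_pos.mpr
        (Nat.pos_of_ne_zero (Fin.val_ne_of_ne (Finset.ne_of_mem_erase hi))))
      ((hrel.mono fun t ht => ?_).filter_mono (nhdsGT_le_nhdsNE 0))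
    rw [logCombination_erase (by simp), ← ht, hQ, eval_zero, zero_mul]
  have hq0 : q 0 = 0 := by
    rwa [← Finset.add_sum_erase _ _ (Finset.mem_univ 0), Finset.sum_eq_zero hq, add_zero] at hQ
  have hqi₀ : q i₀ = 0 := by
    rcases eq_or_ne i₀ 0 with rfl | h
    exacts [hq0, hq i₀ (Finset.mem_erase.mpr ⟨h, Finset.mem_univ _⟩)]
  exact hi₀ (reflect_eq_zero_iff.mp hqi₀)
end

section
/- The sequence (log n)_{n ≥ 1} is not holonomic over ℂ: there do not exist complex polynomials p_0, p_1, ..., p_d, not all zero, such that p_d(n)·log(n+d) + ... + p_1(n)·log(n+1) + p_0(n)·log n = 0 for every integer n ≥ 1. -/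
/-!
Put `t = 1 / n` and let `q i` be the reversal of `p i` to a common degree `D`, so that
`p i n = n ^ D * q i t`. As `log (n + i) = - log t + log (1 + i * t)`, the relation says
`Q t * log t = A t` at every `t = 1 / n`, where `Q = ∑ i, q i` and
`A t = ∑ i, q i t * log (1 + i * t)` is real-analytic near `0`.

A nonzero polynomial multiple of `log (t - c)` cannot agree with a function analytic at `c` at
points accumulating at `c` from the right: factoring powers of `t - c` out of both sides leaves
`(t - c) ^ m * |log (t - c)|`, for some integer `m`, trapped between two positive constants,
whereas it tends to `0` or to `∞`. Hence `Q = 0`, so `A` vanishes at the points `1 / n` and, by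
the identity theorem, on `(-1 / d, ∞)`. At `-1 / d` only the summand `q d t * log (1 + d * t)` is
singular, so the same fact gives `q d = 0`; descending through `i`, every `q i` with `i ≥ 1`
vanishes, and then so does `q 0 = Q - ∑_{i ≥ 1} q i`.
-/

open Filter Polynomial Topology Finset

theorem Filter.not_frequently_eq_of_tendsto_of_disjoint {α β : Type*} {l : Filter α}
    {lf lg : Filter β} {f g : α → β} (hf : Tendsto f l lf) (hg : Tendsto g l lg)
    (hfg : Disjoint lf lg) : ¬ ∃ᶠ x in l, f x = g x := by
  intro h
  have := frequently_iff_neBot.1 h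
  exact (hf.mono_left (inf_le_left (b := 𝓟 {x | f x = g x}))).not_tendsto hfg <|
    (hg.mono_left inf_le_left).congr' (eventually_inf_principal.2 (.of_forall fun _ hx => hx.symm))

theorem tendsto_sub_nhdsGT (c : ℝ) : Tendsto (fun t => t - c) (𝓝[>] c) (𝓝[>] 0) :=
  tendsto_nhdsWithin_iff.2 ⟨((continuous_sub_right c).tendsto' c 0 (sub_self c)).mono_left
    nhdsWithin_le_nhds, eventually_nhdsWithin_of_forall fun _ ht => sub_pos.2 (Set.mem_Ioi.1 ht)⟩

theorem tendsto_pow_succ_mul_abs_log_nhdsGT_zero (m : ℕ) :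
    Tendsto (fun s : ℝ => s ^ (m + 1) * |Real.log s|) (𝓝[>] 0) (𝓝 0) := by
  have h₁ := ((continuous_pow m).tendsto (0 : ℝ)).mono_left (nhdsWithin_le_nhds (s := Set.Ioi 0))
  have h₂ := (tendsto_log_mul_rpow_nhdsGT_zero zero_lt_one).abs
  simpa only [abs_zero, mul_zero] using (h₁.mul h₂).congr' <|
    eventually_mem_nhdsWithin.mono fun s hs => by
      rw [Real.rpow_one, abs_mul, abs_of_pos (Set.mem_Ioi.1 hs), pow_succ]
      ring

theorem not_frequently_pow_mul_abs_log_eq {c r₀ b₀ : ℝ} {r b : ℝ → ℝ}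
    (hr : Tendsto r (𝓝[>] c) (𝓝 r₀)) (hr₀ : 0 < r₀) (hb : Tendsto b (𝓝[>] c) (𝓝 b₀))
    {j k : ℕ} (hkj : k ≤ j ∨ b₀ ≠ 0) :
    ¬ ∃ᶠ t in 𝓝[>] c, (t - c) ^ k * (r t * |Real.log (t - c)|) = (t - c) ^ j * b t := by
  have hs := tendsto_sub_nhdsGT c
  have hpos : ∀ᶠ t in 𝓝[>] c, 0 < t - c := hs self_mem_nhdsWithin
  intro hfreq
  rcases le_or_gt k j with hle | hlt
  · obtain ⟨m, rfl⟩ := Nat.exists_eq_add_of_le hle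
    refine not_frequently_eq_of_tendsto_of_disjoint
      (hr.pos_mul_atTop hr₀ (tendsto_abs_atBot_atTop.comp (Real.tendsto_log_nhdsGT_zero.comp hs)))
      (((hs.mono_right nhdsWithin_le_nhds).pow m).mul hb) (disjoint_nhds_atTop _).symm
      ((hfreq.and_eventually hpos).mono fun t ⟨ht, htc⟩ => ?_)
    refine mul_left_cancel₀ (pow_ne_zero k htc.ne') ?_
    simp only [Function.comp_apply]
    rw [ht]
    ring
  · obtain ⟨m, rfl⟩ := Nat.exists_eq_add_of_lt hlt
    refine not_frequently_eq_of_tendsto_of_disjoint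
      (((tendsto_pow_succ_mul_abs_log_nhdsGT_zero m).comp hs).mul hr) hb
      (disjoint_nhds_nhds.2 (by rw [zero_mul]; exact (hkj.resolve_left (by omega)).symm))
      ((hfreq.and_eventually hpos).mono fun t ⟨ht, htc⟩ => ?_)
    refine mul_left_cancel₀ (pow_ne_zero j htc.ne') ?_
    simp only [Function.comp_apply]
    rw [← ht]
    ring

theorem Polynomial.eq_zero_of_frequently_eval_mul_log_sub_eq {Q : ℂ[X]} {h : ℝ → ℂ} {c : ℝ}
    (hh : AnalyticAt ℝ h c)
    (hQh : ∃ᶠ t : ℝ in 𝓝[>] c, Q.eval (t : ℂ) * Real.log (t - c) = h t) : Q = 0 := by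
  by_contra hQ
  obtain ⟨R, hQR, hRc⟩ := Q.exists_eq_pow_rootMultiplicity_mul_and_not_dvd hQ c
  rw [dvd_iff_isRoot, IsRoot.def] at hRc
  set k := Q.rootMultiplicity (c : ℂ)
  have hR : Tendsto (fun t : ℝ => ‖R.eval (t : ℂ)‖) (𝓝[>] c) (𝓝 ‖R.eval (c : ℂ)‖) :=
    ((R.continuous.comp Complex.continuous_ofReal).norm.tendsto c).mono_left nhdsWithin_le_nhds
  have hnorm : ∃ᶠ t : ℝ in 𝓝[>] c,
      (t - c) ^ k * (‖R.eval (t : ℂ)‖ * |Real.log (t - c)|) = ‖h t‖ := by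
    refine (hQh.and_eventually eventually_mem_nhdsWithin).mono fun t ⟨ht, htc⟩ => ?_
    rw [← ht, hQR, eval_mul, eval_pow, eval_sub, eval_X, eval_C, ← Complex.ofReal_sub, norm_mul,
      norm_mul, norm_pow, Complex.norm_real, Complex.norm_real, Real.norm_eq_abs, Real.norm_eq_abs,
      abs_of_pos (sub_pos.2 (Set.mem_Ioi.1 htc)), mul_assoc]
  by_cases h0 : ∀ᶠ t in 𝓝 c, h t = 0
  · refine not_frequently_pow_mul_abs_log_eq hR (norm_pos_iff.2 hRc) tendsto_const_nhds
      (Or.inl le_rfl) (b := fun _ => 0) (j := k) ?_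
    refine (hnorm.and_eventually (eventually_nhdsWithin_of_eventually_nhds h0)).mono ?_
    rintro t ⟨ht', ht⟩
    rw [ht', ht, norm_zero, mul_zero]
  · obtain ⟨j, B, hB, hBc, hhB⟩ := hh.exists_eventuallyEq_pow_smul_nonzero_iff.2 h0
    refine not_frequently_pow_mul_abs_log_eq hR (norm_pos_iff.2 hRc)
      (hB.continuousAt.norm.tendsto.mono_left nhdsWithin_le_nhds) (j := j) (k := k)
      (Or.inr (norm_ne_zero_iff.2 hBc)) ?_
    refine (hnorm.and_eventually (eventually_mem_nhdsWithin.and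
      (eventually_nhdsWithin_of_eventually_nhds hhB))).mono ?_
    rintro t ⟨ht, htc, hht⟩
    rw [ht, hht, norm_smul, norm_pow, Real.norm_eq_abs, abs_of_pos (sub_pos.2 (Set.mem_Ioi.1 htc))]

theorem Polynomial.analyticAt_eval_ofReal (Q : ℂ[X]) (t : ℝ) :
    AnalyticAt ℝ (fun x : ℝ => Q.eval (x : ℂ)) t :=
  ((Complex.ofRealCLM.analyticAt t).aeval_polynomial Q).congr
    (.of_forall fun x => by simp [Polynomial.coe_aeval_eq_eval])

theorem Polynomial.eq_zero_of_frequently_eval_mul_log_one_add_mul_eq {Q : ℂ[X]} {h : ℝ → ℂ}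
    {A : ℝ} (hA : 0 < A) (hh : AnalyticAt ℝ h (-A⁻¹))
    (hQh : ∃ᶠ t : ℝ in 𝓝[>] (-A⁻¹), Q.eval (t : ℂ) * Real.log (1 + A * t) = h t) : Q = 0 := by
  refine eq_zero_of_frequently_eval_mul_log_sub_eq
    (h := fun t => h t - Q.eval (t : ℂ) * Real.log A)
    (hh.sub ((Q.analyticAt_eval_ofReal _).mul analyticAt_const))
    ((hQh.and_eventually eventually_mem_nhdsWithin).mono fun t ⟨ht, htA⟩ => ?_)
  have hsplit : Real.log (1 + A * t) = Real.log A + Real.log (t - -A⁻¹) := by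
    rw [← Real.log_mul hA.ne' (sub_pos.2 htA).ne']
    congr 1
    field_simp
    ring
  rw [← ht, hsplit]
  push_cast
  ring

theorem analyticAt_eval_mul_log_one_add_mul (Q : ℂ[X]) {a t : ℝ} (ht : 0 < 1 + a * t) :
    AnalyticAt ℝ (fun x : ℝ => Q.eval (x : ℂ) * (Real.log (1 + a * x) : ℂ)) t :=
  (Q.analyticAt_eval_ofReal t).mul <| (Complex.ofRealCLM.analyticAt _).comp
    (f := fun x : ℝ => Real.log (1 + a * x))
    ((analyticAt_log ht).comp (f := fun x : ℝ => 1 + a * x) (by fun_prop))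

theorem analyticAt_sum_eval_mul_log_one_add_mul {ι : Type*} (s : Finset ι) (a : ι → ℝ)
    (q : ι → ℂ[X]) {t : ℝ} (ht : ∀ i ∈ s, 0 < 1 + a i * t) :
    AnalyticAt ℝ (fun x : ℝ => ∑ i ∈ s, (q i).eval (x : ℂ) * Real.log (1 + a i * x)) t :=
  Finset.analyticAt_fun_sum s fun i hi => analyticAt_eval_mul_log_one_add_mul (q i) (ht i hi)

theorem eq_zero_of_frequently_sum_eval_mul_log_one_add_mul_eq_zero {ι : Type*} (s : Finset ι)
    {a : ι → ℝ} (ha : ∀ i ∈ s, 0 < a i) (hinj : Set.InjOn a s) {q : ι → ℂ[X]}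
    (h : ∃ᶠ t : ℝ in 𝓝[≠] 0, ∑ i ∈ s, (q i).eval (t : ℂ) * Real.log (1 + a i * t) = 0) :
    ∀ i ∈ s, q i = 0 := by
  classical
  induction s using Finset.induction_on_max_value a with
  | empty => simp
  | insert i₀ s hi₀ hmax ih =>
    have hA : 0 < a i₀ := ha i₀ (mem_insert_self i₀ s)
    have hpos : ∀ t ∈ Set.Ioi (-(a i₀)⁻¹), ∀ i ∈ insert i₀ s, 0 < 1 + a i * t := by
      intro t ht i hi
      have hAt : 0 < 1 + a i₀ * t := by
        have := mul_lt_mul_of_pos_left (Set.mem_Ioi.1 ht) hA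
        rw [mul_neg, mul_inv_cancel₀ hA.ne'] at this
        linarith
      have hai : a i ≤ a i₀ := (mem_insert.1 hi).elim (fun h => h ▸ le_rfl) (hmax i)
      rcases le_or_gt 0 t with ht₀ | ht₀
      · have := ha i hi
        positivity
      · nlinarith
    have hs : ∀ i ∈ s, 0 < 1 + a i * -(a i₀)⁻¹ := by
      intro i hi
      have hlt : a i < a i₀ := (hmax i hi).lt_of_ne fun h =>
        hi₀ (hinj (mem_insert_of_mem hi) (mem_insert_self i₀ s) h ▸ hi)
      rw [show 1 + a i * -(a i₀)⁻¹ = (a i₀ - a i) / a i₀ by field_simp; ring]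
      exact div_pos (sub_pos.2 hlt) hA
    have hF : Set.EqOn (fun t : ℝ => ∑ i ∈ insert i₀ s, (q i).eval (t : ℂ) * Real.log (1 + a i * t))
        0 (Set.Ioi (-(a i₀)⁻¹)) :=
      AnalyticOnNhd.eqOn_zero_of_preconnected_of_frequently_eq_zero
        (fun t ht => analyticAt_sum_eval_mul_log_one_add_mul _ a q (hpos t ht)) isPreconnected_Ioi
        (neg_lt_zero.2 (inv_pos.2 hA)) h
    have hq₀ : q i₀ = 0 := by
      refine eq_zero_of_frequently_eval_mul_log_one_add_mul_eq hA
        (analyticAt_sum_eval_mul_log_one_add_mul s a q hs).neg (Eventually.frequently ?_)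
      filter_upwards [self_mem_nhdsWithin] with t ht
      have := hF ht
      simp only [sum_insert hi₀, Pi.zero_apply] at this
      rw [Pi.neg_apply]
      exact eq_neg_of_add_eq_zero_left this
    have hG : ∃ᶠ t : ℝ in 𝓝[≠] 0, ∑ i ∈ s, (q i).eval (t : ℂ) * Real.log (1 + a i * t) = 0 := by
      refine Eventually.frequently ?_
      filter_upwards [eventually_nhdsWithin_of_eventually_nhds
        (Ioi_mem_nhds (neg_lt_zero.2 (inv_pos.2 hA)))] with t ht
      simpa [sum_insert hi₀, hq₀] using hF ht
    intro i hi
    rcases mem_insert.1 hi with rfl | hi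
    · exact hq₀
    · exact ih (fun i hi => ha i (mem_insert_of_mem hi)) (hinj.mono (by simp)) hG i hi

theorem Polynomial.eval_reflect_inv_mul_pow {K : Type*} [Field K] {x : K} (hx : x ≠ 0) {N : ℕ}
    {f : K[X]} (hf : f.natDegree ≤ N) : (f.reflect N).eval x⁻¹ * x ^ N = f.eval x := by
  let := invertibleOfNonzero hx
  exact eval₂_reflect_mul_pow (RingHom.id K) x N f hf

theorem sum_eval_mul_log_add_eq {ι : Type*} (s : Finset ι) (p : ι → ℂ[X]) (a : ι → ℝ) {D : ℕ}
    (hD : ∀ i ∈ s, (p i).natDegree ≤ D) {x : ℝ} (hx : x ≠ 0) (hxa : ∀ i ∈ s, x + a i ≠ 0) :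
    ∑ i ∈ s, (p i).eval (x : ℂ) * Real.log (x + a i) = (x : ℂ) ^ D *
      (∑ i ∈ s, ((p i).reflect D).eval ((x⁻¹ : ℝ) : ℂ) * Real.log (1 + a i * x⁻¹) -
        (∑ i ∈ s, (p i).reflect D).eval ((x⁻¹ : ℝ) : ℂ) * Real.log x⁻¹) := by
  rw [eval_finsetSum, sum_mul, mul_sub, mul_sum, mul_sum, ← sum_sub_distrib]
  refine sum_congr rfl fun i hi => ?_
  have hlog : Real.log (x + a i) = Real.log x + Real.log (1 + a i * x⁻¹) := by
    have h₁ : x + a i = x * (1 + a i * x⁻¹) := by field_simp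
    rw [h₁, Real.log_mul hx (right_ne_zero_of_mul (h₁ ▸ hxa i hi))]
  rw [← eval_reflect_inv_mul_pow (Complex.ofReal_ne_zero.2 hx) (hD i hi), hlog, Real.log_inv]
  push_cast
  ring

theorem frequently_eval_reflect_mul_log_eq {ι : Type*} (s : Finset ι) (p : ι → ℂ[X]) {a : ι → ℝ}
    (ha : ∀ i ∈ s, 0 ≤ a i) {D : ℕ} (hD : ∀ i ∈ s, (p i).natDegree ≤ D)
    (hrel : ∀ᶠ n : ℕ in atTop, ∑ i ∈ s, (p i).eval (n : ℂ) * Real.log (n + a i) = 0) :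
    ∃ᶠ t : ℝ in 𝓝[>] 0, (∑ i ∈ s, (p i).reflect D).eval (t : ℂ) * Real.log t =
      ∑ i ∈ s, ((p i).reflect D).eval (t : ℂ) * Real.log (1 + a i * t) := by
  refine (tendsto_inv_atTop_nhdsGT_zero.comp tendsto_natCast_atTop_atTop).frequently
    (Eventually.frequently ?_)
  filter_upwards [hrel, eventually_gt_atTop 0] with n hn hn₀
  have hx : (n : ℝ) ≠ 0 := by positivity
  rw [← Complex.ofReal_natCast, sum_eval_mul_log_add_eq s p a hD hx fun i hi => by
    have := ha i hi; positivity] at hn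
  refine (sub_eq_zero.1 ((mul_eq_zero.1 hn).resolve_left ?_)).symm
  exact pow_ne_zero _ (by exact_mod_cast hx)

theorem log_not_holonomic_complex :
    ¬ ∃ (d : ℕ) (p : Fin (d + 1) → Polynomial ℂ),
      (∃ i, p i ≠ 0) ∧
      ∀ n : ℕ, 1 ≤ n →
        (∑ i : Fin (d + 1), (p i).eval (n : ℂ) * (Real.log (n + i) : ℂ)) = 0 := by
  rintro ⟨d, p, ⟨i₀, hi₀⟩, hrel⟩
  set q : Fin (d + 1) → ℂ[X] := fun i => (p i).reflect (∑ j, (p j).natDegree)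
  have hsep := frequently_eval_reflect_mul_log_eq univ p (a := fun i => ((i : ℕ) : ℝ))
    (fun _ _ => Nat.cast_nonneg _)
    (fun i _ => single_le_sum (f := fun j => (p j).natDegree) (fun _ _ => Nat.zero_le _)
      (mem_univ i))
    (eventually_atTop.2 ⟨1, hrel⟩)
  have hq : ∑ i, q i = 0 := eq_zero_of_frequently_eval_mul_log_sub_eq
    (analyticAt_sum_eval_mul_log_one_add_mul univ _ q fun _ _ => by simp)
    (hsep.mono fun t ht => by rwa [sub_zero])
  have hq' : ∀ i ∈ univ.erase 0, q i = 0 := by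
    refine eq_zero_of_frequently_sum_eval_mul_log_one_add_mul_eq_zero (univ.erase 0)
      (a := fun i : Fin (d + 1) => ((i : ℕ) : ℝ))
      (fun i hi => Nat.cast_pos.2 (Fin.pos_iff_ne_zero.2 (ne_of_mem_erase hi)))
      (Nat.cast_injective.comp Fin.val_injective).injOn ?_
    refine (hsep.filter_mono (nhdsWithin_mono _ fun t ht => ne_of_gt ht)).mono fun t ht => ?_
    rw [sum_erase _ (by simp), ← ht, hq, eval_zero, zero_mul]
  have hq₀ : q 0 = 0 := by
    rwa [← add_sum_erase _ _ (mem_univ 0), sum_eq_zero hq', add_zero] at hq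
  have hqi₀ : q i₀ = 0 := by
    rcases eq_or_ne i₀ 0 with rfl | h
    · exact hq₀
    · exact hq' i₀ (mem_erase.2 ⟨h, mem_univ _⟩)
  exact hi₀ (reflect_eq_zero_iff.1 hqi₀)
end

section
/- Let d ≥ 1, let b_0 = 0 < b_1 < ... < b_d be real numbers, and let p_0, p_1, ..., p_d be real polynomials, not all of them zero. Then the function F(x) = Σ_{i=0}^d p_i(x)·log(x + b_i) is not identically zero on (0, ∞); that is, there exists x > 0 with F(x) ≠ 0. -/
/-!
With nodes `vᵢ = -bᵢ` and `P = ∏ (X - vᵢ)`, the functions `∑ pᵢ(x) log(x - vᵢ) + u(x) / P(x)ⁿ`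
form a class closed under differentiation: `pᵢ` becomes `pᵢ'`, and the rational part keeps its
shape with `n + 1`. If such a function vanishes for large `x`, differentiating it more often than
the degrees of the `pᵢ` shows that all `pᵢ` are constants `cᵢ`; one more derivative gives the
polynomial identity behind `∑ cᵢ / (x - vᵢ) = -(u / Pⁿ)'`. Comparing residues at the simple nodes
`vᵢ` (the derivative of `u / Pⁿ` has none) forces every `cᵢ = 0`.
-/

open Polynomial Finset Filter Topology Lagrange

theorem Polynomial.mul_derivative_pow {R : Type*} [CommRing R] (P : R[X]) (n : ℕ) :
    P * derivative (P ^ n) = C (n : R) * P ^ n * derivative P := by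
  cases n with
  | zero => simp
  | succ n => rw [derivative_pow_succ]; push_cast; ring

theorem eventually_eq_zero_of_hasDerivAt_atTop {E : Type*} [NormedAddCommGroup E]
    [NormedSpace ℝ E] {f f' : ℝ → E} (hf : ∀ᶠ x in atTop, f x = 0)
    (hf' : ∀ᶠ x in atTop, HasDerivAt f (f' x) x) : ∀ᶠ x in atTop, f' x = 0 := by
  obtain ⟨a, ha⟩ := eventually_atTop.1 hf
  filter_upwards [hf', eventually_gt_atTop a] with x hx hxa
  have hloc : f =ᶠ[𝓝 x] fun _ => 0 :=
    eventually_of_mem (Ioi_mem_nhds hxa) fun y hy => ha y (le_of_lt hy)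
  exact hx.unique ((hasDerivAt_const x 0).congr_of_eventuallyEq hloc)

section NodalRing

variable {R ι : Type*} [CommRing R] [Fintype ι] [DecidableEq ι] (v : ι → R) (p : ι → R[X])

/-- Over `nodal univ v ^ (n + 1)`, this is the rational part of the derivative of
`logRat v p u n` (see `hasDerivAt_logRat`). -/
noncomputable def logRatNumerator (u : R[X]) (n : ℕ) : R[X] :=
  nodal univ v ^ n * ∑ i, p i * nodal (univ.erase i) v + derivative u * nodal univ v
    - C (n : R) * u * derivative (nodal univ v)

theorem eval_node_sum_mul_nodal_erase (i : ι) :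
    (∑ j, p j * nodal (univ.erase j) v).eval (v i)
      = (p i).eval (v i) * (nodal (univ.erase i) v).eval (v i) := by
  rw [eval_finsetSum, sum_eq_single i]
  · exact eval_mul
  · intro j _ hji
    rw [eval_mul, eval_nodal_at_node (mem_erase.2 ⟨hji.symm, mem_univ i⟩), mul_zero]
  · simp

theorem eval_node_logRatNumerator (u : R[X]) (n : ℕ) (i : ι) :
    (logRatNumerator v p u n).eval (v i)
      = (0 ^ n * (p i).eval (v i) - n * u.eval (v i)) * (nodal (univ.erase i) v).eval (v i) := by
  simp only [logRatNumerator, eval_sub, eval_add, eval_mul, eval_pow, eval_C,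
    eval_nodal_at_node (mem_univ i), eval_nodal_derivative_eval_node_eq (mem_univ i),
    eval_node_sum_mul_nodal_erase]
  ring

theorem logRatNumerator_nodal_mul (w : R[X]) (n : ℕ) :
    logRatNumerator v p (nodal univ v * w) (n + 1) = nodal univ v * logRatNumerator v p w n := by
  simp only [logRatNumerator, derivative_mul, Nat.cast_succ, map_add, map_one]
  ring

end NodalRing

section NodalField

variable {K ι : Type*} [Field K] [Fintype ι] {v : ι → K}

theorem nodal_dvd_of_eval_node_eq_zero (hv : Function.Injective v) {u : K[X]}
    (hu : ∀ i, u.eval (v i) = 0) : nodal univ v ∣ u :=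
  Finset.prod_dvd_of_coprime ((pairwise_coprime_X_sub_C hv).set_pairwise _)
    fun i _ => dvd_iff_isRoot.2 (hu i)

variable [DecidableEq ι]

theorem eval_node_nodal_erase_ne_zero (hv : Function.Injective v) (i : ι) :
    (nodal (univ.erase i) v).eval (v i) ≠ 0 :=
  eval_nodal_not_at_node fun _ hj => hv.ne (mem_erase.1 hj).1.symm

/-- At the node `v i` only the residue `pᵢ(vᵢ)` of `∑ pⱼ / (X - vⱼ)` survives, while the
derivative of `u / Pⁿ` has no residues: at a node `u` must vanish, so `P ∣ u` and `n` drops. -/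
theorem eval_node_eq_zero_of_logRatNumerator_eq_zero [CharZero K] (hv : Function.Injective v)
    {p : ι → K[X]} {u : K[X]} {n : ℕ} (h : logRatNumerator v p u n = 0) (i : ι) :
    (p i).eval (v i) = 0 := by
  induction n generalizing u with
  | zero =>
    simpa [eval_node_logRatNumerator, eval_node_nodal_erase_ne_zero hv]
      using congrArg (eval (v i)) h
  | succ n ih =>
    have hu (j : ι) : u.eval (v j) = 0 := by
      simpa [eval_node_logRatNumerator, eval_node_nodal_erase_ne_zero hv,
        Nat.cast_add_one_ne_zero] using congrArg (eval (v j)) h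
    obtain ⟨w, rfl⟩ := nodal_dvd_of_eval_node_eq_zero hv hu
    rw [logRatNumerator_nodal_mul] at h
    exact ih ((mul_eq_zero.1 h).resolve_left nodal_ne_zero)

theorem sum_div_sub_node (p : ι → K[X]) {x : K} (hx : ∀ i, x ≠ v i) :
    ∑ i, (p i).eval x / (x - v i)
      = (∑ i, p i * nodal (univ.erase i) v).eval x / (nodal univ v).eval x := by
  rw [eval_finsetSum, sum_div]
  refine sum_congr rfl fun i _ => ?_
  have hQ : (nodal (univ.erase i) v).eval x ≠ 0 := eval_nodal_not_at_node fun j _ => hx j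
  have hxi : x - v i ≠ 0 := sub_ne_zero.2 (hx i)
  rw [nodal_eq_mul_nodal_erase (mem_univ i), eval_mul, eval_mul, eval_sub, eval_X, eval_C]
  field_simp

end NodalField

section LogRat

variable {ι : Type*} [Fintype ι]

noncomputable def logRat (v : ι → ℝ) (p : ι → ℝ[X]) (u : ℝ[X]) (n : ℕ) (x : ℝ) : ℝ :=
  ∑ i, (p i).eval x * Real.log (x - v i) + u.eval x / (nodal univ v).eval x ^ n

variable [DecidableEq ι] {v : ι → ℝ} {p : ι → ℝ[X]} {u : ℝ[X]} {n : ℕ}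

theorem hasDerivAt_logRat {x : ℝ}
    (hx : ∀ i, x ≠ v i) :
    HasDerivAt (logRat v p u n)
      (logRat v (fun i => derivative (p i)) (logRatNumerator v p u n) (n + 1) x) x := by
  set P := nodal univ v with hP_def
  have hP : P.eval x ≠ 0 := eval_nodal_not_at_node fun j _ => hx j
  have hlog (i : ι) : HasDerivAt (fun y => (p i).eval y * Real.log (y - v i))
      ((derivative (p i)).eval x * Real.log (x - v i) + (p i).eval x * (1 / (x - v i))) x :=
    ((p i).hasDerivAt x).mul (((hasDerivAt_id x).sub_const (v i)).log (sub_ne_zero.2 (hx i)))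
  have hrat : HasDerivAt (fun y => u.eval y / (P ^ n).eval y)
      (((derivative u).eval x * (P ^ n).eval x - u.eval x * (derivative (P ^ n)).eval x)
        / (P ^ n).eval x ^ 2) x :=
    (u.hasDerivAt x).div ((P ^ n).hasDerivAt x) (by rw [eval_pow]; exact pow_ne_zero n hP)
  have hPn :
      P.eval x * (derivative (P ^ n)).eval x = n * P.eval x ^ n * (derivative P).eval x := by
    simpa using congrArg (eval x) (mul_derivative_pow P n)
  have hfun : logRat v p u n
      = fun y => ∑ i, (p i).eval y * Real.log (y - v i) + u.eval y / (P ^ n).eval y := by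
    funext y; simp only [logRat, eval_pow, P]
  rw [hfun]
  refine ((HasDerivAt.fun_sum (u := univ) fun i _ => hlog i).add hrat).congr_deriv ?_
  simp only [logRat, logRatNumerator, sum_add_distrib, mul_one_div, sum_div_sub_node p hx]
  simp only [eval_add, eval_sub, eval_mul, eval_pow, eval_C, ← hP_def]
  rw [add_assoc, add_right_inj]
  field_simp
  linear_combination -(u.eval x * P.eval x ^ (n + 1)) * hPn

theorem logRat_derivative_eventually_eq_zero (h : ∀ᶠ x in atTop, logRat v p u n x = 0) :
    ∀ᶠ x in atTop,
      logRat v (fun i => derivative (p i)) (logRatNumerator v p u n) (n + 1) x = 0 :=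
  eventually_eq_zero_of_hasDerivAt_atTop h <|
    (eventually_all.2 fun i => eventually_ne_atTop (v i)).mono fun _ hx => hasDerivAt_logRat hx

theorem eq_zero_of_logRat_eventually_eq_zero_of_derivative_eq_zero (hv : Function.Injective v)
    (hp : ∀ i, derivative (p i) = 0) (h : ∀ᶠ x in atTop, logRat v p u n x = 0) : p = 0 := by
  have hnum : logRatNumerator v p u n = 0 := by
    by_contra hne
    obtain ⟨x, hx, hroot, hnodes⟩ := ((logRat_derivative_eventually_eq_zero h).and
      ((eventually_atTop_not_isRoot _ hne).and
        (eventually_all.2 fun i => eventually_ne_atTop (v i)))).exists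
    have hP : (nodal univ v).eval x ^ (n + 1) ≠ 0 :=
      pow_ne_zero _ (eval_nodal_not_at_node fun j _ => hnodes j)
    simp only [logRat, hp, eval_zero, zero_mul, sum_const_zero, zero_add, div_eq_zero_iff, hP,
      or_false] at hx
    exact hroot hx
  funext i
  have hi := eval_node_eq_zero_of_logRatNumerator_eq_zero hv hnum i
  rw [eq_C_of_derivative_eq_zero (hp i), eval_C] at hi
  rw [eq_C_of_derivative_eq_zero (hp i), hi, map_zero, Pi.zero_apply]

theorem eq_zero_of_logRat_eventually_eq_zero (hv : Function.Injective v)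
    (h : ∀ᶠ x in atTop, logRat v p u n x = 0) : p = 0 := by
  obtain ⟨M, hM⟩ := Finite.exists_le fun i => (p i).natDegree
  induction M generalizing p u n with
  | zero =>
    exact eq_zero_of_logRat_eventually_eq_zero_of_derivative_eq_zero hv
      (fun i => derivative_of_natDegree_zero (Nat.le_zero.1 (hM i))) h
  | succ M ih =>
    have hp' := ih (logRat_derivative_eventually_eq_zero h)
      fun i => (natDegree_derivative_le (p i)).trans (by have := hM i; omega)
    exact eq_zero_of_logRat_eventually_eq_zero_of_derivative_eq_zero hv (congrFun hp') h

end LogRat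

theorem log_combination_not_identically_zero_general
    (d : ℕ)
    (b : Fin (d + 1) → ℝ) (hb : StrictMono b)
    (p : Fin (d + 1) → Polynomial ℝ) (hp : ∃ i, p i ≠ 0) :
    ∃ x : ℝ, 0 < x ∧
      (∑ i : Fin (d + 1), (p i).eval x * Real.log (x + b i)) ≠ 0 := by
  by_contra! h
  obtain ⟨i, hi⟩ := hp
  refine hi (congrFun (eq_zero_of_logRat_eventually_eq_zero (v := fun j => -b j) (u := 0)
    (n := 0) (neg_injective.comp hb.injective) ?_) i)
  filter_upwards [eventually_gt_atTop 0] with x hx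
  simpa [logRat] using h x hx

theorem log_combination_not_identically_zero
    (d : ℕ) (hd : 1 ≤ d)
    (b : Fin (d + 1) → ℝ) (hb0 : b 0 = 0) (hb : StrictMono b)
    (p : Fin (d + 1) → Polynomial ℝ) (hp : ∃ i, p i ≠ 0) :
    ∃ x : ℝ, 0 < x ∧
      (∑ i : Fin (d + 1), (p i).eval x * Real.log (x + b i)) ≠ 0 :=
  log_combination_not_identically_zero_general d b hb p hp
end

section
/- There do not exist rational polynomials p_0, p_1, ..., p_d, not all zero, such that p_d(n)·log(n+d) + ... + p_1(n)·log(n+1) + p_0(n)·log n = 0 for every integer n ≥ 1. In other words, the sequence (log n)_{n ≥ 1} satisfies no nontrivial holonomic recurrence with rational polynomial coefficients. -/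
/-!
Fix `i`. For every `n > d` with `q = n + i` prime, `q` is the only one of `n, …, n + d`
divisible by `q`. Clearing denominators and exponentiating turns the relation at `n` into
`∏ (n + j) ^ aⱼ = 1` with integer exponents proportional to `pⱼ(n)`; taking `q`-adic valuations
gives `pᵢ(n) = 0`. So `pᵢ` has infinitely many roots and vanishes.
-/

open Finset

theorem padicValRat_prod {p : ℕ} [Fact p.Prime] {ι : Type*} (s : Finset ι) (f : ι → ℚ)
    (hf : ∀ i ∈ s, f i ≠ 0) :
    padicValRat p (∏ i ∈ s, f i) = ∑ i ∈ s, padicValRat p (f i) := by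
  classical
  induction s using Finset.induction with
  | empty => simp
  | insert a s ha ih =>
    have hs : ∀ i ∈ s, f i ≠ 0 := fun i hi => hf i (mem_insert_of_mem hi)
    rw [prod_insert ha, sum_insert ha, padicValRat.mul (hf a (mem_insert_self a s))
      (prod_ne_zero_iff.2 hs), ih hs]

section LogRelations

variable {ι : Type*} (s : Finset ι) (m : ι → ℕ) (p : ℕ) [Fact p.Prime]

theorem sum_intCast_mul_padicValNat_eq_zero_of_sum_mul_log_eq_zero (a : ι → ℤ)
    (hm : ∀ i ∈ s, m i ≠ 0) (h : ∑ i ∈ s, (a i : ℝ) * Real.log (m i) = 0) :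
    ∑ i ∈ s, a i * (padicValNat p (m i) : ℤ) = 0 := by
  have hm' : ∀ i ∈ s, (m i : ℚ) ^ a i ≠ 0 := fun i hi => zpow_ne_zero _ (mod_cast hm i hi)
  have hprod : ∏ i ∈ s, (m i : ℚ) ^ a i = 1 := by
    suffices ((∏ i ∈ s, (m i : ℚ) ^ a i : ℚ) : ℝ) = 1 by exact_mod_cast this
    push_cast
    have hpos : (0 : ℝ) < ∏ i ∈ s, (m i : ℝ) ^ a i :=
      prod_pos fun i hi => zpow_pos (mod_cast Nat.pos_of_ne_zero (hm i hi)) _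
    have hlog : Real.log (∏ i ∈ s, (m i : ℝ) ^ a i) = 0 := by
      rw [Real.log_prod fun i hi => zpow_ne_zero _ (mod_cast hm i hi)]
      simpa only [Real.log_zpow] using h
    exact Real.eq_one_of_pos_of_log_eq_zero hpos hlog
  have hval := congrArg (padicValRat p) hprod
  rw [padicValRat.one, padicValRat_prod s _ hm'] at hval
  exact_mod_cast by simpa [padicValRat.of_nat] using hval

theorem sum_mul_padicValNat_eq_zero_of_sum_mul_log_eq_zero (c : ι → ℚ)
    (hm : ∀ i ∈ s, m i ≠ 0) (h : ∑ i ∈ s, (c i : ℝ) * Real.log (m i) = 0) :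
    ∑ i ∈ s, c i * padicValNat p (m i) = 0 := by
  obtain ⟨⟨b, hb⟩, hbc⟩ := IsLocalization.exist_integer_multiples (nonZeroDivisors ℤ) s c
  choose! a ha using hbc
  replace ha : ∀ i ∈ s, (a i : ℚ) = b * c i := fun i hi => by simpa using ha i hi
  have hb0 : (b : ℚ) ≠ 0 := mod_cast nonZeroDivisors.ne_zero hb
  have hint : ∑ i ∈ s, (a i : ℝ) * Real.log (m i) = 0 := by
    have hcast : ∀ i ∈ s, (a i : ℝ) = b * c i := fun i hi => by exact_mod_cast ha i hi
    calc ∑ i ∈ s, (a i : ℝ) * Real.log (m i) = b * ∑ i ∈ s, (c i : ℝ) * Real.log (m i) := by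
          rw [mul_sum]; exact sum_congr rfl fun i hi => by rw [hcast i hi, mul_assoc]
      _ = 0 := by rw [h, mul_zero]
  have hval := sum_intCast_mul_padicValNat_eq_zero_of_sum_mul_log_eq_zero s m p a hm hint
  replace hval : ∑ i ∈ s, (a i : ℚ) * padicValNat p (m i) = 0 := by
    simpa using congrArg (Int.cast : ℤ → ℚ) hval
  rw [sum_congr rfl fun i hi => by rw [ha i hi, mul_assoc], ← mul_sum] at hval
  exact (mul_eq_zero.1 hval).resolve_left hb0

end LogRelations

theorem coeff_eq_zero_of_sum_mul_log_add_eq_zero {d n : ℕ} (c : Fin (d + 1) → ℚ)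
    (h : ∑ j, (c j : ℝ) * Real.log (n + j) = 0) (i : Fin (d + 1)) (hd : d < n)
    (hq : (n + i).Prime) : c i = 0 := by
  have := Fact.mk hq
  have hval := sum_mul_padicValNat_eq_zero_of_sum_mul_log_eq_zero univ
    (fun j : Fin (d + 1) => n + j) (n + i) c (fun j _ => by omega) (by simpa using h)
  rwa [sum_eq_single i (fun j _ hji => ?_) (by simp), padicValNat_self, Nat.cast_one,
    mul_one] at hval
  have hlt : n + j < 2 * (n + i) := by omega
  have hne : n + (j : ℕ) ≠ n + i := fun hji' => hji (Fin.ext (by omega))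
  have hndvd : ¬ (n + i) ∣ n + j := fun hdvd =>
    hne (Nat.eq_of_dvd_of_lt_two_mul (by omega) hdvd hlt)
  rw [padicValNat.eq_zero_of_not_dvd hndvd, Nat.cast_zero, mul_zero]

theorem Nat.infinite_setOf_lt_and_prime_add (d k : ℕ) :
    {n : ℕ | d < n ∧ (n + k).Prime}.Infinite := by
  refine Set.infinite_of_forall_exists_gt fun a => ?_
  obtain ⟨q, hq, hprime⟩ := Nat.exists_infinite_primes (a + d + k + 1)
  exact ⟨q - k, ⟨by omega, by rwa [Nat.sub_add_cancel (by omega)]⟩, by omega⟩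

theorem Polynomial.eq_zero_of_infinite_natCast_isRoot {R : Type*} [CommRing R] [IsDomain R]
    [CharZero R] (P : Polynomial R) {S : Set ℕ} (hS : S.Infinite) (h : ∀ n ∈ S, P.IsRoot n) :
    P = 0 :=
  P.eq_zero_of_infinite_isRoot <| (hS.image Nat.cast_injective.injOn).mono <| by
    rintro _ ⟨n, hn, rfl⟩
    exact h n hn

theorem log_not_holonomic_rat :
    ¬ ∃ (d : ℕ) (p : Fin (d + 1) → Polynomial ℚ),
      (∃ i, p i ≠ 0) ∧
      ∀ n : ℕ, 1 ≤ n →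
        (∑ i : Fin (d + 1),
          (((p i).eval (n : ℚ) : ℚ) : ℝ) * Real.log (n + i)) = 0 := by
  rintro ⟨d, p, ⟨i, hi⟩, hrel⟩
  refine hi <| (p i).eq_zero_of_infinite_natCast_isRoot (Nat.infinite_setOf_lt_and_prime_add d i)
    fun n ⟨hd, hq⟩ => ?_
  exact coeff_eq_zero_of_sum_mul_log_add_eq_zero (fun j => (p j).eval (n : ℚ))
    (hrel n (by omega)) i hd hq
end

section
/- Let d ≥ 0, let I and J be disjoint subsets of {0, 1, ..., d}, not both empty, and for each i ∈ I ∪ J let q_i be a nonzero integer polynomial with positive leading coefficient. Then it is not the case that for all sufficiently large integers n one has ∏_{i∈I} (n+i)^{q_i(n)} = ∏_{j∈J} (n+j)^{q_j(n)}; i.e., there exist arbitrarily large integers n (with all exponents q_i(n) positive) for which the two products are unequal. -/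
/-!
Take `k ∈ I ∪ J` and a prime `p > d` large enough that all exponents are positive at
`n = p - k`. Among `n, n + 1, …, n + d` only `n + k = p` is divisible by `p`, so `p` divides
the product on the side containing `k` and not the other one.
-/

open Polynomial Filter Finset

theorem Polynomial.eventually_pos_eval_atTop {𝕜 : Type*} [NormedField 𝕜] [LinearOrder 𝕜]
    [IsStrictOrderedRing 𝕜] [OrderTopology 𝕜] {P : 𝕜[X]} (hP : 0 < P.leadingCoeff) :
    ∀ᶠ x in atTop, 0 < P.eval x :=
  P.isEquivalent_atTop_lead.eventually_pos <|
    (eventually_gt_atTop 0).mono fun _ hx => mul_pos hP (pow_pos hx _)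

theorem Polynomial.eventually_pos_eval_natCast {P : ℤ[X]} (hP : 0 < P.leadingCoeff) :
    ∀ᶠ n : ℕ in atTop, 0 < P.eval (n : ℤ) := by
  have hPℝ : 0 < (P.map (Int.castRingHom ℝ)).leadingCoeff := by
    simpa [leadingCoeff_map_of_injective (Int.castRingHom ℝ).injective_int] using hP
  filter_upwards [tendsto_natCast_atTop_atTop.eventually (eventually_pos_eval_atTop hPℝ)]
    with n hn
  simpa [eval_natCast_map] using hn

theorem Nat.Prime.dvd_prod_pow_add_iff {p n k d : ℕ} (hp : p.Prime) (hn : n ≠ 0)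
    (hnk : n + k = p) (hdp : d < p) {S : Finset ℕ} (hS : S ⊆ range (d + 1)) {e : ℕ → ℕ}
    (hek : e k ≠ 0) : p ∣ ∏ i ∈ S, (n + i) ^ e i ↔ k ∈ S := by
  have hwindow : ∀ i ≤ d, p ∣ n + i → i = k := fun i hi hdvd => by
    have := Nat.eq_of_dvd_of_lt_two_mul (by omega) hdvd (by omega)
    omega
  rw [hp.prime.dvd_finsetProd_iff]
  constructor
  · rintro ⟨i, hi, hdvd⟩
    obtain rfl := hwindow i (Nat.lt_succ_iff.1 (mem_range.1 (hS hi)))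
      (hp.prime.dvd_of_dvd_pow hdvd)
    exact hi
  · exact fun hk => ⟨k, hk, hnk ▸ dvd_pow_self p hek⟩

theorem products_unequal_for_arbitrarily_large_n_general
    (d : ℕ) (I J : Finset ℕ)
    (hI : I ⊆ Finset.range (d + 1)) (hJ : J ⊆ Finset.range (d + 1))
    (hdisj : Disjoint I J) (hne : (I ∪ J).Nonempty)
    (q : ℕ → Polynomial ℤ)
    (hqlead : ∀ i ∈ I ∪ J, 0 < (q i).leadingCoeff) :
    ∀ N : ℕ, ∃ n : ℕ, N ≤ n ∧
      (∀ i ∈ I ∪ J, 0 < (q i).eval (n : ℤ)) ∧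
      (∏ i ∈ I, (n + i) ^ ((q i).eval (n : ℤ)).toNat) ≠
        (∏ j ∈ J, (n + j) ^ ((q j).eval (n : ℤ)).toNat) := by
  intro N
  obtain ⟨M, hM⟩ := eventually_atTop.1 <|
    (eventually_all_finset (I ∪ J)).2 fun i hi => eventually_pos_eval_natCast (hqlead i hi)
  obtain ⟨k, hk⟩ := hne
  obtain ⟨p, hp_ge, hp⟩ := Nat.exists_infinite_primes (N + M + d + k + 1)
  set n := p - k
  have hek : ((q k).eval (n : ℤ)).toNat ≠ 0 := by
    have := hM n (by omega) k hk
    omega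
  have hdvd_iff {S : Finset ℕ} (hS : S ⊆ range (d + 1)) :
      p ∣ ∏ i ∈ S, (n + i) ^ ((q i).eval (n : ℤ)).toNat ↔ k ∈ S :=
    hp.dvd_prod_pow_add_iff (by omega) (by omega) (by omega) hS hek
  refine ⟨n, by omega, hM n (by omega), fun heq => ?_⟩
  rcases mem_union.1 hk with hkI | hkJ
  · exact disjoint_left.1 hdisj hkI ((hdvd_iff hJ).1 (heq ▸ (hdvd_iff hI).2 hkI))
  · exact disjoint_right.1 hdisj hkJ ((hdvd_iff hI).1 (heq ▸ (hdvd_iff hJ).2 hkJ))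

theorem products_unequal_for_arbitrarily_large_n
    (d : ℕ) (I J : Finset ℕ)
    (hI : I ⊆ Finset.range (d + 1)) (hJ : J ⊆ Finset.range (d + 1))
    (hdisj : Disjoint I J) (hne : (I ∪ J).Nonempty)
    (q : ℕ → Polynomial ℤ)
    (hq0 : ∀ i ∈ I ∪ J, q i ≠ 0)
    (hqlead : ∀ i ∈ I ∪ J, 0 < (q i).leadingCoeff) :
    ∀ N : ℕ, ∃ n : ℕ, N ≤ n ∧
      (∀ i ∈ I ∪ J, 0 < (q i).eval (n : ℤ)) ∧
      (∏ i ∈ I, (n + i) ^ ((q i).eval (n : ℤ)).toNat) ≠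
        (∏ j ∈ J, (n + j) ^ ((q j).eval (n : ℤ)).toNat) :=
  products_unequal_for_arbitrarily_large_n_general d I J hI hJ hdisj hne q hqlead
end
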